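/- arXiv:2312.10012 — 2 statements merged into one kernel-verified Lean document; each statement's English description precedes it below -/
import Mathlib

section
/- Let C be a U(ℍ)-gain cycle on n ≥ 3 edges with vertices v₁,…,v_n and edges ordered so that the incidence matrix H(C) = (η_{ij}) ∈ ℍ^{n×n} has nonzero entries η_{jj} = 1 for j = 1,…,n, η_{j,j+1} = −φ(e_{j,j+1}) for j = 1,…,n−1, and η_{n,1} = −φ(e_{n,1}). Then rdet₁ H(C) = 1 − φ(C), where φ(C) = φ(e_{12})φ(e_{23})⋯φ(e_{n-1,n})φ(e_{n,1}). -/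
open scoped Quaternion
open Matrix

noncomputable section

abbrev ℍq : Type := ℍ[ℝ]

section RowColDet

variable {ι : Type*} [Fintype ι] [LinearOrder ι]

/-- The orbit of `cur` under `σ`, stopping when the orbit returns to `start`. -/
def orbitAux (σ : Equiv.Perm ι) (start : ι) : ℕ → ι → List ι
  | 0, _ => []
  | fuel + 1, cur => cur :: (if σ cur = start then [] else orbitAux σ start fuel (σ cur))

/-- The cycle of `σ` containing `x`, listed as `[x, σ x, σ² x, …]`. -/
def orbitList (σ : Equiv.Perm ι) (x : ι) : List ι :=
  orbitAux σ x (Fintype.card ι) x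

def groupsAux (σ : Equiv.Perm ι) : List ι → List ι → List (List ι)
  | [], _ => []
  | x :: rest, visited =>
      if x ∈ visited then groupsAux σ rest visited
      else orbitList σ x :: groupsAux σ rest (visited ++ orbitList σ x)

/-- The canonical disjoint-cycle listing of `σ`: the first cycle begins with `i`,
every other cycle begins with its smallest element, and the leading elements of
the remaining cycles appear in increasing order. -/
def cycleGroups (σ : Equiv.Perm ι) (i : ι) : List (List ι) :=
  orbitList σ i :: groupsAux σ (Finset.sort Finset.univ (· ≤ ·)) (orbitList σ i)

/-- The `i`-th row determinant of a quaternion matrix: the cycles of each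
permutation are ordered from left to right (first cycle beginning with `i`),
and within each cycle the factors `a_{x, σ x}` are multiplied following the cycle. -/
def rdet (A : Matrix ι ι ℍq) (i : ι) : ℍq :=
  ∑ σ : Equiv.Perm ι,
    ((Equiv.Perm.sign σ : ℤ) : ℍq) *
      ((cycleGroups σ i).map fun g => (g.map fun x => A x (σ x)).prod).prod

/-- The `j`-th column determinant of a quaternion matrix: the cycles of each
permutation are ordered from right to left (the rightmost cycle containing `j`). -/
def cdet (A : Matrix ι ι ℍq) (j : ι) : ℍq :=
  ∑ τ : Equiv.Perm ι,
    ((Equiv.Perm.sign τ : ℤ) : ℍq) *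
      (((cycleGroups τ j).reverse).map fun g => (g.map fun x => A x (τ x)).prod).prod

/-- The determinant of a (Hermitian) quaternion matrix: the common value of all
row and column determinants (here computed as the row determinant at the least index). -/
def qdet (A : Matrix ι ι ℍq) : ℍq :=
  letI := Classical.dec (Nonempty ι)
  if h : Nonempty ι then rdet A (Finset.univ.min' (by rwa [Finset.univ_nonempty_iff])) else 1

end RowColDet


/-- cyclic successor on `Fin n` -/
def cycSucc {s : ℕ} (k : Fin s) : Fin s := ⟨(k.1 + 1) % s, Nat.mod_lt _ k.pos⟩

/-! A permutation `σ` contributes to `rdet H(C)` only if `σ x ∈ {x, c x}` for every vertex `x`,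
where `c = finRotate n` is the successor map of the cycle; since `c` is a single cycle moving every
vertex, this forces `σ = 1` or `σ = c`. The identity contributes `1`. The cycle `c` has a single
cycle group, which starts at vertex `0` and runs through the vertices in order, so it contributes
`sign c · ∏ (-φ(e_{j,j+1})) = (-1)^(n-1) (-1)^n φ(C) = -φ(C)`. -/

section RowDeterminant

variable {ι : Type*} [Fintype ι] [LinearOrder ι]

theorem mem_orbitList_self (σ : Equiv.Perm ι) (x : ι) : x ∈ orbitList σ x := by
  have : Nonempty ι := ⟨x⟩
  obtain ⟨k, hk⟩ := Nat.exists_eq_succ_of_ne_zero (Fintype.card_ne_zero (α := ι))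
  rw [orbitList, hk, orbitAux]
  exact List.mem_cons_self

theorem groupsAux_covers (σ : Equiv.Perm ι) (l : List ι) :
    ∀ visited, ∀ x ∈ l, x ∈ visited ∨ ∃ gl ∈ groupsAux σ l visited, x ∈ gl := by
  induction l with
  | nil => simp
  | cons a rest ih =>
    intro visited x hx
    rw [groupsAux]
    split_ifs with ha
    · rcases List.mem_cons.mp hx with rfl | hx
      · exact Or.inl ha
      · exact ih visited x hx
    · rcases List.mem_cons.mp hx with rfl | hx
      · exact Or.inr ⟨_, List.mem_cons_self, mem_orbitList_self σ x⟩
      · rcases ih _ x hx with h | ⟨gl, hgl, hx⟩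
        · rcases List.mem_append.mp h with h | h
          · exact Or.inl h
          · exact Or.inr ⟨_, List.mem_cons_self, h⟩
        · exact Or.inr ⟨gl, List.mem_cons_of_mem _ hgl, hx⟩

theorem groupsAux_eq_nil_of_subset (σ : Equiv.Perm ι) (l : List ι) :
    ∀ visited, (∀ x ∈ l, x ∈ visited) → groupsAux σ l visited = [] := by
  induction l with
  | nil => intro _ _; rfl
  | cons a rest ih =>
    intro visited h
    rw [groupsAux, if_pos (h a List.mem_cons_self)]
    exact ih visited fun x hx => h x (List.mem_cons_of_mem _ hx)

theorem exists_mem_cycleGroups (σ : Equiv.Perm ι) (i x : ι) :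
    ∃ gl ∈ cycleGroups σ i, x ∈ gl := by
  have hx : x ∈ Finset.sort Finset.univ (· ≤ ·) := (Finset.mem_sort _).mpr (Finset.mem_univ x)
  rcases groupsAux_covers σ _ (orbitList σ i) x hx with h | ⟨gl, hgl, hx⟩
  · exact ⟨_, List.mem_cons_self, h⟩
  · exact ⟨gl, List.mem_cons_of_mem _ hgl, hx⟩

theorem cycleGroups_eq_singleton {σ : Equiv.Perm ι} {i : ι} (h : ∀ x, x ∈ orbitList σ i) :
    cycleGroups σ i = [orbitList σ i] := by
  rw [cycleGroups, groupsAux_eq_nil_of_subset _ _ _ fun x _ => h x]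

def rdetTerm (A : Matrix ι ι ℍq) (i : ι) (σ : Equiv.Perm ι) : ℍq :=
  ((Equiv.Perm.sign σ : ℤ) : ℍq) *
    ((cycleGroups σ i).map fun g => (g.map fun x => A x (σ x)).prod).prod

theorem rdet_eq_sum_rdetTerm (A : Matrix ι ι ℍq) (i : ι) :
    rdet A i = ∑ σ, rdetTerm A i σ :=
  rfl

theorem rdetTerm_eq_zero {A : Matrix ι ι ℍq} {σ : Equiv.Perm ι} {x : ι} (h : A x (σ x) = 0)
    (i : ι) : rdetTerm A i σ = 0 := by
  obtain ⟨gl, hgl, hx⟩ := exists_mem_cycleGroups σ i x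
  refine mul_eq_zero_of_right _ (List.prod_eq_zero (List.mem_map.mpr ⟨gl, hgl, ?_⟩))
  exact List.prod_eq_zero (List.mem_map.mpr ⟨x, hx, h⟩)

theorem rdetTerm_one {A : Matrix ι ι ℍq} (h : ∀ x, A x x = 1) (i : ι) : rdetTerm A i 1 = 1 := by
  simp [rdetTerm, h]

theorem rdetTerm_of_forall_mem_orbitList (A : Matrix ι ι ℍq) {σ : Equiv.Perm ι} {i : ι}
    (h : ∀ x, x ∈ orbitList σ i) :
    rdetTerm A i σ =
      ((Equiv.Perm.sign σ : ℤ) : ℍq) * ((orbitList σ i).map fun x => A x (σ x)).prod := by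
  simp [rdetTerm, cycleGroups_eq_singleton h]

end RowDeterminant

theorem Equiv.Perm.IsCycle.eq_one_or_eq_of_forall_apply_eq_or_eq {α : Type*} [Finite α]
    {c σ : Equiv.Perm α} (hc : c.IsCycle) (hmove : ∀ x, c x ≠ x)
    (h : ∀ x, σ x = x ∨ σ x = c x) : σ = 1 ∨ σ = c := by
  refine or_iff_not_imp_left.mpr fun h1 => ?_
  obtain ⟨x₀, hx₀⟩ : ∃ x, σ x ≠ x := by
    by_contra! hfix
    exact h1 (Equiv.ext hfix)
  have key : ∀ k : ℕ, σ ((c ^ k) x₀) = c ((c ^ k) x₀) := by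
    intro k
    induction k with
    | zero => exact (h x₀).resolve_left hx₀
    | succ k ih =>
      rw [pow_succ', Equiv.Perm.mul_apply]
      -- a fixed point of `σ` at `c y` would collide with `σ y = c y`
      exact (h _).resolve_left fun hfix => hmove _ (σ.injective (hfix.trans ih.symm))
  ext y
  obtain ⟨k, rfl⟩ := hc.exists_pow_eq (hmove x₀) (hmove y)
  rw [key k]

theorem rdet_eq_one_add_of_isCycle {ι : Type*} [Fintype ι] [LinearOrder ι]
    (A : Matrix ι ι ℍq) {c : Equiv.Perm ι} (hc : c.IsCycle) (hmove : ∀ x, c x ≠ x) {i : ι}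
    (horb : ∀ x, x ∈ orbitList c i) (hdiag : ∀ x, A x x = 1)
    (hzero : ∀ x y, y ≠ x → y ≠ c x → A x y = 0) :
    rdet A i =
      1 + ((Equiv.Perm.sign c : ℤ) : ℍq) * ((orbitList c i).map fun x => A x (c x)).prod := by
  rw [rdet_eq_sum_rdetTerm, Fintype.sum_eq_add 1 c hc.ne_one.symm, rdetTerm_one hdiag,
    rdetTerm_of_forall_mem_orbitList A horb]
  rintro σ ⟨h1, hσ⟩
  obtain ⟨x, hx, hcx⟩ : ∃ x, σ x ≠ x ∧ σ x ≠ c x := by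
    by_contra! hσc
    exact (hc.eq_one_or_eq_of_forall_apply_eq_or_eq hmove
      fun x => or_iff_not_imp_left.mpr (hσc x)).elim h1 hσ
  exact rdetTerm_eq_zero (hzero x _ hx hcx) i

theorem orbitAux_finRotate (m : ℕ) (j : Fin (m + 1)) :
    orbitAux (finRotate (m + 1)) 0 (m + 1 - j) j = (List.finRange (m + 1)).drop j := by
  induction j using Fin.reverseInduction with
  | last =>
    rw [Fin.val_last, List.drop_eq_getElem_cons (by simp)]
    simp [orbitAux, Fin.ext_iff]
  | cast i ih =>
    have hsucc : finRotate (m + 1) i.castSucc = i.succ :=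
      Fin.ext (by rw [coe_finRotate_of_ne_last (Fin.castSucc_lt_last i).ne]; simp)
    rw [show m + 1 - (i.castSucc : ℕ) = m + 1 - (i.succ : ℕ) + 1 by simp; omega, orbitAux,
      hsucc, if_neg (Fin.succ_ne_zero i), ih]
    conv_rhs => rw [List.drop_eq_getElem_cons (by simp)]
    simp [Fin.ext_iff]

theorem cycSucc_eq_finRotate {n : ℕ} (x : Fin n) : cycSucc x = finRotate n x := by
  cases n with
  | zero => exact x.elim0
  | succ m =>
    ext
    rw [coe_finRotate]
    have hx := x.isLt
    split_ifs with h
    · simp [cycSucc, h]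
    · have : x.val ≠ m := fun e => h (Fin.ext e)
      exact Nat.mod_eq_of_lt (by omega)

theorem finRotate_apply_ne_self {n : ℕ} (hn : 2 ≤ n) (x : Fin n) : finRotate n x ≠ x :=
  Equiv.Perm.mem_support.mp (by simp [support_finRotate_of_le hn])

theorem orbitList_finRotate_zero (m : ℕ) :
    orbitList (finRotate (m + 1)) 0 = List.finRange (m + 1) := by
  simpa [orbitList] using orbitAux_finRotate m 0

theorem rdet_eq_one_sub_prod_of_finRotate {m : ℕ} (hm : 1 ≤ m)
    (A : Matrix (Fin (m + 1)) (Fin (m + 1)) ℍq) (g : Fin (m + 1) → ℍq)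
    (hdiag : ∀ x, A x x = 1) (hsucc : ∀ x, A x (finRotate (m + 1) x) = -g x)
    (hzero : ∀ x y, y ≠ x → y ≠ finRotate (m + 1) x → A x y = 0) :
    rdet A 0 = 1 - ((List.finRange (m + 1)).map g).prod := by
  rw [rdet_eq_one_add_of_isCycle A (isCycle_finRotate_of_le (by omega))
      (finRotate_apply_ne_self (by omega))
      (by simp [orbitList_finRotate_zero]) hdiag hzero, orbitList_finRotate_zero,
    List.map_congr_left (g := Neg.neg ∘ g) fun x _ => hsucc x, ← List.map_map, List.prod_map_neg, List.length_map,
    List.length_finRange, sign_finRotate, ← mul_assoc]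
  push_cast
  rw [← pow_add, Odd.neg_one_pow ⟨m, by omega⟩, neg_one_mul, sub_eq_add_neg]

/-- **Lemma.** For the incidence matrix `H(C)` of a `U(ℍ)`-gain cycle on `n ≥ 3` edges,
with `η_{jj} = 1`, `η_{j,j+1} = -φ(e_{j,j+1})` (indices mod `n`), one has
`rdet₁ H(C) = 1 - φ(C)` where `φ(C) = φ(e_{12}) φ(e_{23}) ⋯ φ(e_{n,1})`. -/
theorem rdet_one_incidence_of_cycle (n : ℕ) (hn : 3 ≤ n) (g : Fin n → ℍq) :
    rdet (Matrix.of fun i j : Fin n =>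
        if j = i then 1 else if j = cycSucc i then -g i else 0) ⟨0, by omega⟩
      = 1 - ((List.finRange n).map g).prod := by
  obtain ⟨m, rfl⟩ : ∃ m, n = m + 1 := ⟨n - 1, by omega⟩
  simp only [cycSucc_eq_finRotate]
  refine rdet_eq_one_sub_prod_of_finRotate (by omega) _ g (fun x => by simp)
    (fun x => ?_) (fun x y h₁ h₂ => by simp only [of_apply, if_neg h₁, if_neg h₂])
  rw [of_apply, if_neg (finRotate_apply_ne_self (by omega) x), if_pos rfl]
end
end

section
/- Let A ∈ ℍ^{n×n} be a quaternion matrix. Then for every i = 1,…,n, rdet_i(A*) = conj(cdet_i A), where A* is the conjugate transpose of A and conj denotes quaternion conjugation. -/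
open scoped Quaternion
open Matrix

noncomputable section

/-!
Match the term of `σ` in `rdet_i A*` with the term of `σ⁻¹` in `cdet_i A`. The cycles of `σ⁻¹`
are those of `σ`, found from the same leading elements but traversed backwards. Conjugation
reverses products, so the conjugate of the `cdet_i A` term of `σ⁻¹` multiplies the entries
`conj a_{σ y, y} = (A*)_{y, σ y}` along each cycle of `σ` in forward order, with the cycles in the
order used by `rdet_i`: this is the `rdet_i A*` term of `σ`, and `sgn σ⁻¹ = sgn σ`.
-/

theorem star_list_prod {R : Type*} [Monoid R] [StarMul R] (l : List R) :
    star l.prod = (l.map star).reverse.prod := by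
  simpa [Function.comp_def] using unop_map_list_prod (starMulEquiv (R := R)) l

section Orbits

open MulAction

variable {ι : Type*} [LinearOrder ι] (σ : Equiv.Perm ι) (x : ι)

theorem orbitAux_pow_eq {fuel j : ℕ} (hj : j < period σ x) (hfuel : period σ x - j ≤ fuel) :
    orbitAux σ x fuel ((σ ^ j) x) = (List.range' j (period σ x - j)).map fun k => (σ ^ k) x := by
  induction fuel generalizing j with
  | zero => omega
  | succ fuel ih =>
    have hσ : σ ((σ ^ j) x) = (σ ^ (j + 1)) x := by rw [pow_succ', Equiv.Perm.mul_apply]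
    rw [orbitAux, hσ, show period σ x - j = period σ x - (j + 1) + 1 by omega, List.range'_succ,
      List.map_cons]
    congr 1
    by_cases hlast : j + 1 = period σ x
    · have hfix : (σ ^ (j + 1)) x = x := by
        rw [hlast, ← Equiv.Perm.smul_def, pow_period_smul]
      rw [if_pos hfix, hlast, Nat.sub_self, List.range'_zero, List.map_nil]
    · have hnext : j + 1 < period σ x := by omega
      have hmoved : (σ ^ (j + 1)) x ≠ x := pow_smul_ne_of_lt_period j.succ_pos hnext
      rw [if_neg hmoved, ih hnext (by omega)]

variable [Fintype ι]

theorem orbitList_eq_map_range :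
    orbitList σ x = (List.range (period σ x)).map fun k => (σ ^ k) x := by
  have hpos : 0 < period σ x := period_pos_of_orderOf_pos (orderOf_pos σ) x
  have hcard : period σ x ≤ Fintype.card ι := Function.minimalPeriod_le_card
  simpa [orbitList, List.range_eq_range'] using orbitAux_pow_eq σ x (j := 0) hpos (by omega)

theorem mem_orbitList_iff {y : ι} : y ∈ orbitList σ x ↔ σ.SameCycle x y := by
  simp only [orbitList_eq_map_range, List.mem_map, List.mem_range]
  constructor
  · rintro ⟨k, -, rfl⟩
    exact ⟨k, zpow_natCast σ k ▸ rfl⟩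
  · intro h
    obtain ⟨k, rfl⟩ := h.exists_nat_pow_eq
    exact ⟨k % period σ x, Nat.mod_lt _ (period_pos_of_orderOf_pos (orderOf_pos σ) x),
      pow_mod_period_smul k (m := σ) (a := x)⟩

theorem mem_orbitList_inv {y : ι} : y ∈ orbitList σ⁻¹ x ↔ y ∈ orbitList σ x := by
  rw [mem_orbitList_iff, mem_orbitList_iff, Equiv.Perm.sameCycle_inv]

theorem reverse_orbitList_inv : (orbitList σ⁻¹ x).reverse = (orbitList σ x).map σ := by
  rw [orbitList_eq_map_range, orbitList_eq_map_range, period_inv, List.map_map]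
  refine List.ext_getElem (by simp) fun k hk _ => ?_
  simp only [List.length_reverse, List.length_map, List.length_range] at hk
  simp only [List.getElem_reverse, List.getElem_map, List.getElem_range, List.length_map,
    List.length_range, Function.comp_apply]
  apply (σ ^ (period σ x - 1 - k)).injective
  rw [inv_pow, Equiv.Perm.coe_inv, Equiv.apply_symm_apply, ← Equiv.Perm.mul_apply,
    ← Equiv.Perm.mul_apply, ← pow_succ, ← pow_add,
    show period σ x - 1 - k + 1 + k = period σ x by omega, ← Equiv.Perm.smul_def, pow_period_smul]

theorem prod_orbitList_conjTranspose {R : Type*} [Monoid R] [StarMul R] (A : Matrix ι ι R) :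
    ((orbitList σ x).map fun y => Aᴴ y (σ y)).prod
      = star (((orbitList σ⁻¹ x).map fun y => A y (σ⁻¹ y)).prod) := by
  rw [star_list_prod, List.map_map, ← List.map_reverse, reverse_orbitList_inv, List.map_map]
  congr 1
  exact List.map_congr_left fun y _ => by simp

theorem map_groupsAux_inv {β : Type*} (F G : List ι → β)
    (hFG : ∀ x, F (orbitList σ x) = G (orbitList σ⁻¹ x)) (l : List ι) {v v' : List ι}
    (hv : ∀ y, y ∈ v ↔ y ∈ v') :
    (groupsAux σ l v).map F = (groupsAux σ⁻¹ l v').map G := by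
  induction l generalizing v v' with
  | nil => rfl
  | cons x rest ih =>
    by_cases hx : x ∈ v
    · simp only [groupsAux, if_pos hx, if_pos ((hv x).mp hx), ih hv]
    · simp only [groupsAux, if_neg hx, if_neg (mt (hv x).mpr hx), List.map_cons, hFG]
      exact congrArg _ (ih fun y => by simp only [List.mem_append, hv, mem_orbitList_inv])

theorem map_cycleGroups_inv {β : Type*} (F G : List ι → β)
    (hFG : ∀ x, F (orbitList σ x) = G (orbitList σ⁻¹ x)) (i : ι) :
    (cycleGroups σ i).map F = (cycleGroups σ⁻¹ i).map G := by
  rw [cycleGroups, cycleGroups, List.map_cons, List.map_cons, hFG,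
    map_groupsAux_inv σ F G hFG _ fun y => (mem_orbitList_inv σ i).symm]

end Orbits

/-- **Lemma.** `rdet_i (A*) = conj (cdet_i A)` for every `i`. -/
theorem rdet_conjTranspose_eq_star_cdet {n : ℕ} (A : Matrix (Fin n) (Fin n) ℍq)
    (i : Fin n) :
    rdet Aᴴ i = star (cdet A i) := by
  rw [rdet, cdet, star_sum]
  refine Fintype.sum_equiv (Equiv.inv _) _ _ fun σ => ?_
  rw [Equiv.inv_apply, star_mul, star_intCast, Equiv.Perm.sign_inv,
    ← (Int.cast_commute _ _).eq, star_list_prod, List.map_map, List.map_reverse,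
    List.reverse_reverse]
  congr 2
  exact map_cycleGroups_inv σ _ _ (fun x => prod_orbitList_conjTranspose σ x A) i
end
end
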